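/- arXiv:2601.14169 — 2 statements merged into one kernel-verified Lean document; each statement's English description precedes it below -/
import Mathlib

section
/- Let F : ℝ^d → [F̲, F̄] be globally Lipschitz, bounded and strictly positive (0 < F̲ ≤ F̄), with Lipschitz constant Lip(F). Then with C_F := (1/F̲)(1 + F̄/F̲)(Lip(F) + 2F̄), for any probability measures f, g on ℝ^d, W₁^∧(F f / ⟨F,f⟩, F g / ⟨F,g⟩) ≤ C_F · W₁^∧(f, g), where F f / ⟨F,f⟩ denotes the reweighted probability measure with density F/⟨F,f⟩ with respect to f. -/
open MeasureTheory ProbabilityTheory Set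
open scoped ENNReal NNReal

noncomputable section

/-- `ℝ^d` with the Euclidean norm. -/
abbrev Euc (d : ℕ) := EuclideanSpace ℝ (Fin d)

/-- The standard Gaussian measure `N(0, I_d)` on `ℝ^d`. -/
def stdGaussian (d : ℕ) : Measure (Euc d) :=
  (Measure.pi fun _ : Fin d => gaussianReal 0 1).map
    (MeasurableEquiv.toLp 2 (Fin d → ℝ))

/-- The uniform probability measure on the cube `[0,1]^d`. -/
def unifCube (d : ℕ) : Measure (Euc d) :=
  (Measure.pi fun _ : Fin d => volume.restrict (Set.Icc (0:ℝ) 1)).map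
    (MeasurableEquiv.toLp 2 (Fin d → ℝ))

/-- The uniform probability measure on `[0,N)`. -/
def unifIco (N : ℕ) : Measure ℝ :=
  ((N : ℝ≥0∞))⁻¹ • volume.restrict (Set.Ico (0:ℝ) (N:ℝ))

/-- The Bernoulli measure `(1-τ)δ₀ + τδ₁` on `ℝ`. -/
def bern (τ : ℝ) : Measure ℝ :=
  ENNReal.ofReal (1 - τ) • Measure.dirac (0:ℝ) + ENNReal.ofReal τ • Measure.dirac 1

/-- Crossover-mutation update: `x' = (1-γ)⊙x + γ⊙x* + σξ` (componentwise product). -/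
def crossover {d : ℕ} (γ ξ : Euc d) (σ : ℝ) (x xs : Euc d) : Euc d :=
  WithLp.toLp 2 fun i => (1 - γ i) * x i + γ i * xs i + σ * ξ i

/-- The reweighted probability measure `F f / ⟨F, f⟩`. -/
def reweight {d : ℕ} (F : Euc d → ℝ) (f : Measure (Euc d)) : Measure (Euc d) :=
  f.withDensity fun x => ENNReal.ofReal (F x / ∫ y, F y ∂f)

/-- The gain operator `Q⁺(f,f)`: the law of `(1-γ)⊙x + γ⊙x* + σξ` where `x, x*` are
independent with law `F f/⟨F,f⟩`, `γ ~ Unif[0,1]^d` and `ξ ~ N(0,I_d)`. -/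
def Qplus {d : ℕ} (F : Euc d → ℝ) (σ : ℝ) (f : Measure (Euc d)) : Measure (Euc d) :=
  ((((reweight F f).prod (reweight F f)).prod ((unifCube d).prod (stdGaussian d))).map
    fun p => crossover p.2.1 p.2.2 σ p.1.1 p.1.2)

/-- Bounded-Lipschitz (BL) norm of `f - g`:
`sup {∫φ df - ∫φ dg : Lip(φ) ≤ 1, ‖φ‖_∞ ≤ 1/2}`. -/
def blDist {d : ℕ} (f g : Measure (Euc d)) : ℝ :=
  sSup {r | ∃ φ : Euc d → ℝ, LipschitzWith 1 φ ∧ (∀ x, |φ x| ≤ 1/2) ∧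
    r = (∫ x, φ x ∂f) - ∫ x, φ x ∂g}

/-- `W₁^∧(f,g)`: Wasserstein-1 distance with truncated cost `min(|x-y|,1)`. -/
def W1trunc {d : ℕ} (f g : Measure (Euc d)) : ℝ :=
  sInf {r | ∃ pl : Measure (Euc d × Euc d), IsProbabilityMeasure pl ∧
    pl.map Prod.fst = f ∧ pl.map Prod.snd = g ∧
    r = ∫ z, min (dist z.1 z.2) 1 ∂pl}

/-- `W₁(f,g)`: Wasserstein-1 distance with cost `|x-y|`. -/
def W1 {d : ℕ} (f g : Measure (Euc d)) : ℝ :=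
  sInf {r | ∃ pl : Measure (Euc d × Euc d), IsProbabilityMeasure pl ∧
    pl.map Prod.fst = f ∧ pl.map Prod.snd = g ∧
    r = ∫ z, dist z.1 z.2 ∂pl}

/-- The Fournier–Guillin rate `ε₁(N)`. -/
def rate (d N : ℕ) : ℝ :=
  if d = 1 then (N : ℝ) ^ (-(1/2 : ℝ))
  else if d = 2 then (N : ℝ) ^ (-(1/2 : ℝ)) * Real.log (1 + N)
  else (N : ℝ) ^ (-(1 / (d : ℝ)))

/-- The `q`-th moment `M_q(f) = ∫ |x|^q f(dx)`. -/
def Mq {d : ℕ} (q : ℝ) (f : Measure (Euc d)) : ℝ := ∫ x, ‖x‖ ^ q ∂f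

/-- Moment assumption on `q`: `q > 2` for `d ≤ 2`, `q ≥ d/(d-1)` for `d > 2`. -/
def momentCond (d : ℕ) (q : ℝ) : Prop :=
  (d ≤ 2 → 2 < q) ∧ (2 < d → (d : ℝ) / ((d : ℝ) - 1) ≤ q)

/-- Index map `j(w,α) := min { j : α < N ∑_{ℓ ≤ j} w^ℓ }`. -/
def idxMap {N : ℕ} (hN : 0 < N) (w : Fin N → ℝ) (α : ℝ) : Fin N :=
  if h : (Finset.univ.filter fun j : Fin N => α < N * ∑ ℓ ∈ Finset.Iic j, w ℓ).Nonempty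
  then (Finset.univ.filter fun j : Fin N => α < N * ∑ ℓ ∈ Finset.Iic j, w ℓ).min' h
  else ⟨0, hN⟩

/-- Fitness-proportional weights `w^i = F(x^i)/∑_ℓ F(x^ℓ)`. -/
def gaWeights {d N : ℕ} (F : Euc d → ℝ) (x : Fin N → Euc d) : Fin N → ℝ :=
  fun i => F (x i) / ∑ ℓ, F (x ℓ)

/-- Empirical measure `(1/N) ∑ δ_{x^i}`. -/
def empMeas {d N : ℕ} (x : Fin N → Euc d) : Measure (Euc d) :=
  ((N : ℝ≥0∞))⁻¹ • ∑ i, Measure.dirac (x i)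

/-- Weighted empirical measure `∑ w^i δ_{x^i}`. -/
def wEmpMeas {d N : ℕ} (w : Fin N → ℝ) (x : Fin N → Euc d) : Measure (Euc d) :=
  ∑ i, ENNReal.ofReal (w i) • Measure.dirac (x i)


/-!
Let `π` be a coupling of `f` and `g`, and `a = ⟨F, f⟩`, `b = ⟨F, g⟩`. The measure
`min (F x / a) (F y / b) π(dx, dy)` has marginals below the two reweighted measures, and adding the
normalised product of its two marginal defects makes it a coupling of them. The cost of that
coupling is at most `(F̄ / F̲) ∫ c dπ`, with `c(x, y) = min (|x - y|, 1)`, plus the defect mass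
`≤ ∫ |F x / a - F y / b| dπ`, which is controlled through `|F x - F y| ≤ (Lip F + F̄) c(x, y)` and
`|a - b| ≤ ∫ |F x - F y| dπ`. Taking the infimum over `π` gives the claim.
-/

section Coupling

variable {α β : Type*} [MeasurableSpace α] [MeasurableSpace β]

lemma map_withDensity_comp (π : Measure α) {T : α → β} (hT : Measurable T) {h : β → ℝ≥0∞}
    (hh : Measurable h) :
    (π.withDensity fun z => h (T z)).map T = (π.map T).withDensity h := by
  ext s hs
  rw [Measure.map_apply hT hs, withDensity_apply _ (hT hs), withDensity_apply _ hs,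
    setLIntegral_map hs hh hT]

lemma map_withDensity_ofReal_le (π : Measure α) {T : α → β} (hT : Measurable T) {m : α → ℝ}
    {p : β → ℝ} (hp : Measurable p) (hmp : ∀ z, m z ≤ p (T z)) :
    (π.withDensity fun z => ENNReal.ofReal (m z)).map T ≤
      (π.map T).withDensity fun x => ENNReal.ofReal (p x) := by
  rw [← map_withDensity_comp π hT hp.ennreal_ofReal]
  exact Measure.map_mono
    (withDensity_mono (ae_of_all _ fun z => ENNReal.ofReal_le_ofReal (hmp z))) hT

lemma integrable_of_forall_mem_Icc {μ : Measure α} [IsFiniteMeasure μ] {F : α → ℝ} {a b : ℝ}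
    (hF : Measurable F) (hFab : ∀ x, F x ∈ Icc a b) : Integrable F μ :=
  .of_bound hF.aestronglyMeasurable (max |a| |b|)
    (ae_of_all _ fun x => abs_le_max_abs_abs (hFab x).1 (hFab x).2)

lemma isProbabilityMeasure_withDensity_ofReal {μ : Measure α} {p : α → ℝ} (hpi : Integrable p μ)
    (hp0 : 0 ≤ p) (hp1 : ∫ x, p x ∂μ = 1) :
    IsProbabilityMeasure (μ.withDensity fun x => ENNReal.ofReal (p x)) := by
  constructor
  rw [withDensity_apply _ MeasurableSet.univ, setLIntegral_univ,
    ← ofReal_integral_eq_lintegral_ofReal hpi (Filter.Eventually.of_forall hp0), hp1,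
    ENNReal.ofReal_one]

lemma MeasureTheory.Measure.inv_smul_smul_measure_univ {γ : Type*} [MeasurableSpace γ]
    (m : Measure γ) [IsFiniteMeasure m] : (m univ)⁻¹ • m univ • m = m := by
  rcases eq_or_ne (m univ) 0 with h0 | h0
  · rw [Measure.measure_univ_eq_zero.mp h0, smul_zero, smul_zero]
  · rw [smul_smul, ENNReal.inv_mul_cancel h0 (measure_ne_top m univ), one_smul]

lemma exists_coupling_of_map_fst_le_of_map_snd_le {μ : Measure α} {ν : Measure β}
    [IsProbabilityMeasure μ] [IsProbabilityMeasure ν] (π : Measure (α × β)) [IsFiniteMeasure π]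
    (h₁ : π.map Prod.fst ≤ μ) (h₂ : π.map Prod.snd ≤ ν) :
    ∃ σ : Measure (α × β), IsFiniteMeasure σ ∧ σ univ = 1 - π univ ∧
      (π + σ).map Prod.fst = μ ∧ (π + σ).map Prod.snd = ν := by
  set ε := 1 - π univ
  have hμ : (μ - π.map Prod.fst) univ = ε := by
    rw [Measure.sub_apply .univ h₁, Measure.map_apply measurable_fst .univ, preimage_univ,
      measure_univ]
  have hν : (ν - π.map Prod.snd) univ = ε := by
    rw [Measure.sub_apply .univ h₂, Measure.map_apply measurable_snd .univ, preimage_univ,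
      measure_univ]
  have hσ : (ε⁻¹ • (μ - π.map Prod.fst).prod (ν - π.map Prod.snd)) univ = ε := by
    rw [Measure.smul_apply, ← univ_prod_univ, Measure.prod_prod, ← hμ, hν, ← hμ, smul_eq_mul,
      ← mul_assoc]
    rcases eq_or_ne ((μ - π.map Prod.fst) univ) 0 with h0 | h0
    · rw [h0, mul_zero]
    · rw [ENNReal.inv_mul_cancel h0 (measure_ne_top _ _), one_mul]
  refine ⟨_, ⟨hσ.trans_lt (tsub_le_self.trans_lt ENNReal.one_lt_top)⟩, hσ, ?_, ?_⟩
  · rw [Measure.map_add _ _ measurable_fst, Measure.map_smul, Measure.map_fst_prod, hν,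
      ← hμ, Measure.inv_smul_smul_measure_univ, add_comm,
      Measure.sub_add_cancel_of_le h₁]
  · rw [Measure.map_add _ _ measurable_snd, Measure.map_smul, Measure.map_snd_prod, hμ,
      ← hν, Measure.inv_smul_smul_measure_univ, add_comm,
      Measure.sub_add_cancel_of_le h₂]

lemma integral_withDensity_ofReal {μ : Measure α} {m : α → ℝ} (hm : Measurable m) (hm0 : 0 ≤ m)
    (c : α → ℝ) : ∫ x, c x ∂μ.withDensity (fun x => ENNReal.ofReal (m x)) = ∫ x, m x * c x ∂μ := by
  rw [integral_withDensity_eq_integral_toReal_smul hm.ennreal_ofReal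
    (ae_of_all _ fun _ => ENNReal.ofReal_lt_top)]
  simp only [ENNReal.toReal_ofReal (hm0 _), smul_eq_mul]

lemma integral_add_measure_le_of_mem_Icc {π σ : Measure α} [IsFiniteMeasure π]
    [IsFiniteMeasure σ] {c : α → ℝ} (hc : Measurable c) (hc01 : ∀ x, c x ∈ Icc 0 1) :
    ∫ x, c x ∂(π + σ) ≤ ∫ x, c x ∂π + (σ univ).toReal := by
  rw [integral_add_measure (integrable_of_forall_mem_Icc hc hc01)
    (integrable_of_forall_mem_Icc hc hc01)]
  gcongr
  calc ∫ x, c x ∂σ ≤ ∫ _, (1 : ℝ) ∂σ := integral_mono (integrable_of_forall_mem_Icc hc hc01)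
        (integrable_const 1) fun x => (hc01 x).2
    _ = (σ univ).toReal := by simp [Measure.real]

lemma exists_coupling_withDensity (π : Measure (α × β)) [IsProbabilityMeasure π]
    {p : α → ℝ} {q : β → ℝ} (hp : Measurable p) (hq : Measurable q) (hp0 : 0 ≤ p) (hq0 : 0 ≤ q)
    (hpi : Integrable p (π.map Prod.fst)) (hqi : Integrable q (π.map Prod.snd))
    (hp1 : ∫ x, p x ∂π.map Prod.fst = 1) (hq1 : ∫ y, q y ∂π.map Prod.snd = 1)
    {c : α × β → ℝ} (hc : Measurable c) (hc01 : ∀ z, c z ∈ Icc 0 1) :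
    ∃ ρ : Measure (α × β), IsProbabilityMeasure ρ ∧
      ρ.map Prod.fst = (π.map Prod.fst).withDensity (fun x => ENNReal.ofReal (p x)) ∧
      ρ.map Prod.snd = (π.map Prod.snd).withDensity (fun y => ENNReal.ofReal (q y)) ∧
      ∫ z, c z ∂ρ ≤ ∫ z, min (p z.1) (q z.2) * c z ∂π + ∫ z, |p z.1 - q z.2| ∂π := by
  set m : α × β → ℝ := fun z => min (p z.1) (q z.2)
  have hm : Measurable m := (hp.comp measurable_fst).min (hq.comp measurable_snd)
  have hm0 : 0 ≤ m := fun z => le_min (hp0 _) (hq0 _)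
  have hpi' : Integrable (fun z => p z.1) π := hpi.comp_measurable measurable_fst
  have hqi' : Integrable (fun z => q z.2) π := hqi.comp_measurable measurable_snd
  have hmi : Integrable m π := hpi'.mono' hm.aestronglyMeasurable
    (ae_of_all _ fun z => (Real.norm_of_nonneg (hm0 z)).trans_le (min_le_left _ _))
  set π₁ := π.withDensity fun z => ENNReal.ofReal (m z)
  have : IsFiniteMeasure π₁ := isFiniteMeasure_withDensity_ofReal hmi.2
  have := isProbabilityMeasure_withDensity_ofReal hpi hp0 hp1
  have := isProbabilityMeasure_withDensity_ofReal hqi hq0 hq1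
  obtain ⟨σ, hσ, hσuniv, hρ₁, hρ₂⟩ := exists_coupling_of_map_fst_le_of_map_snd_le π₁
    (map_withDensity_ofReal_le π measurable_fst hp fun _ => min_le_left _ _)
    (map_withDensity_ofReal_le π measurable_snd hq fun _ => min_le_right _ _)
  have hπ₁ : π₁ univ = ENNReal.ofReal (∫ z, m z ∂π) := by
    rw [withDensity_apply _ .univ, setLIntegral_univ,
      ← ofReal_integral_eq_lintegral_ofReal hmi (ae_of_all _ hm0)]
  have hdefect : (σ univ).toReal ≤ ∫ z, |p z.1 - q z.2| ∂π := by
    have hp1' : ∫ z, p z.1 ∂π = 1 := by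
      rwa [← integral_map measurable_fst.aemeasurable hp.aestronglyMeasurable]
    rw [hσuniv, hπ₁, ← ENNReal.ofReal_one, ← ENNReal.ofReal_sub _ (integral_nonneg hm0),
      ENNReal.toReal_ofReal', ← hp1', ← integral_sub hpi' hmi]
    exact max_le (integral_mono (hpi'.sub hmi) (hpi'.sub hqi').abs fun z =>
        (sub_le_sub_right (le_max_left _ _) _).trans_eq (max_sub_min_eq_abs' _ _))
      (integral_nonneg fun _ => abs_nonneg _)
  refine ⟨π₁ + σ, ⟨?_⟩, hρ₁, hρ₂, ?_⟩
  · rw [← preimage_univ (f := Prod.fst), ← Measure.map_apply measurable_fst .univ, hρ₁,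
      measure_univ]
  · calc ∫ z, c z ∂(π₁ + σ) ≤ ∫ z, c z ∂π₁ + (σ univ).toReal :=
          integral_add_measure_le_of_mem_Icc hc hc01
      _ ≤ _ := by rw [integral_withDensity_ofReal hm hm0]; gcongr

end Coupling

section Reweighting

variable {α : Type*} [MeasurableSpace α]

lemma integral_mem_Icc_of_forall_mem {μ : Measure α} [IsProbabilityMeasure μ] {F : α → ℝ}
    {a b : ℝ} (hF : Measurable F) (hFab : ∀ x, F x ∈ Icc a b) : ∫ x, F x ∂μ ∈ Icc a b := by
  have hi : Integrable F μ := integrable_of_forall_mem_Icc hF hFab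
  constructor
  · simpa using integral_mono (integrable_const a) hi fun x => (hFab x).1
  · simpa using integral_mono hi (integrable_const b) fun x => (hFab x).2

lemma abs_integral_map_fst_sub_integral_map_snd_le (π : Measure (α × α)) {F : α → ℝ}
    (hF : Measurable F) (h₁ : Integrable F (π.map Prod.fst)) (h₂ : Integrable F (π.map Prod.snd)) :
    |∫ x, F x ∂π.map Prod.fst - ∫ x, F x ∂π.map Prod.snd| ≤ ∫ z, |F z.1 - F z.2| ∂π := by
  have h₁' : Integrable (fun z => F z.1) π := h₁.comp_measurable measurable_fst
  have h₂' : Integrable (fun z => F z.2) π := h₂.comp_measurable measurable_snd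
  rw [integral_map measurable_fst.aemeasurable hF.aestronglyMeasurable,
    integral_map measurable_snd.aemeasurable hF.aestronglyMeasurable]
  calc |∫ z, F z.1 ∂π - ∫ z, F z.2 ∂π| = |∫ z, (F z.1 - F z.2) ∂π| := by
        rw [integral_sub h₁' h₂']
    _ ≤ ∫ z, |F z.1 - F z.2| ∂π := abs_integral_le_integral_abs

lemma abs_div_sub_div_le {u v a b l M : ℝ} (hl : 0 < l) (ha : l ≤ a) (hb : l ≤ b) (hv : |v| ≤ M) :
    |u / a - v / b| ≤ |u - v| / l + M / l ^ 2 * |a - b| := by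
  have ha0 : 0 < a := hl.trans_le ha
  have hb0 : 0 < b := hl.trans_le hb
  have hsplit : u / a - v / b = (u - v) / a + v * (b - a) / (a * b) := by field_simp; ring
  have hM : 0 ≤ M := (abs_nonneg v).trans hv
  calc |u / a - v / b| ≤ |(u - v) / a| + |v * (b - a) / (a * b)| := hsplit ▸ abs_add_le _ _
    _ = |u - v| / a + |v| * |a - b| / (a * b) := by
        rw [abs_div, abs_div, abs_mul, abs_of_pos ha0, abs_of_pos (mul_pos ha0 hb0),
          abs_sub_comm b a]
    _ ≤ |u - v| / l + M * |a - b| / (l * l) := by gcongr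
    _ = |u - v| / l + M / l ^ 2 * |a - b| := by ring

lemma integral_abs_div_sub_div_le (π : Measure (α × α)) [IsProbabilityMeasure π] {F : α → ℝ}
    {c : α × α → ℝ} {Fl Fu K : ℝ} (hF : Measurable F) (hFmem : ∀ x, F x ∈ Icc Fl Fu)
    (hFl : 0 < Fl) (hc : Integrable c π) (hΔ : ∀ z, |F z.1 - F z.2| ≤ K * c z) :
    ∫ z, |F z.1 / ∫ x, F x ∂π.map Prod.fst - F z.2 / ∫ x, F x ∂π.map Prod.snd| ∂π ≤
      K / Fl * (1 + Fu / Fl) * ∫ z, c z ∂π := by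
  have := Measure.isProbabilityMeasure_map (μ := π) measurable_fst.aemeasurable
  have := Measure.isProbabilityMeasure_map (μ := π) measurable_snd.aemeasurable
  set a := ∫ x, F x ∂π.map Prod.fst
  set b := ∫ x, F x ∂π.map Prod.snd
  set r := ∫ z, c z ∂π
  have ha : a ∈ Icc Fl Fu := integral_mem_Icc_of_forall_mem hF hFmem
  have hb : b ∈ Icc Fl Fu := integral_mem_Icc_of_forall_mem hF hFmem
  have hFu : 0 ≤ Fu := hFl.le.trans (ha.1.trans ha.2)
  have hab : |a - b| ≤ K * r := by
    calc |a - b| ≤ ∫ z, |F z.1 - F z.2| ∂π := abs_integral_map_fst_sub_integral_map_snd_le π hF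
          (integrable_of_forall_mem_Icc hF hFmem) (integrable_of_forall_mem_Icc hF hFmem)
      _ ≤ ∫ z, K * c z ∂π := integral_mono_of_nonneg (ae_of_all _ fun _ => abs_nonneg _)
          (hc.const_mul _) (ae_of_all _ hΔ)
      _ = K * r := integral_const_mul _ _
  have hpt : ∀ z : α × α, |F z.1 / a - F z.2 / b| ≤ K * c z / Fl + Fu / Fl ^ 2 * (K * r) := by
    intro z
    have hFz : |F z.2| ≤ Fu := abs_le.2 ⟨by linarith [(hFmem z.2).1], (hFmem z.2).2⟩
    calc |F z.1 / a - F z.2 / b| ≤ |F z.1 - F z.2| / Fl + Fu / Fl ^ 2 * |a - b| :=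
          abs_div_sub_div_le hFl ha.1 hb.1 hFz
      _ ≤ K * c z / Fl + Fu / Fl ^ 2 * (K * r) := by gcongr; exact hΔ z
  calc _ ≤ ∫ z, (K * c z / Fl + Fu / Fl ^ 2 * (K * r)) ∂π :=
        integral_mono_of_nonneg (ae_of_all _ fun _ => abs_nonneg _)
          (((hc.const_mul _).div_const _).add (integrable_const _)) (ae_of_all _ hpt)
    _ = K * r / Fl + Fu / Fl ^ 2 * (K * r) := by
        rw [integral_add ((hc.const_mul _).div_const _) (integrable_const _), integral_div,
          integral_const_mul, integral_const, probReal_univ, one_smul]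
    _ = K / Fl * (1 + Fu / Fl) * r := by field_simp

lemma exists_coupling_withDensity_div_integral (π : Measure (α × α)) [IsProbabilityMeasure π]
    {F : α → ℝ} {c : α × α → ℝ} {Fl Fu K : ℝ} (hF : Measurable F) (hFmem : ∀ x, F x ∈ Icc Fl Fu)
    (hFl : 0 < Fl) (hc : Measurable c) (hc01 : ∀ z, c z ∈ Icc 0 1)
    (hΔ : ∀ z, |F z.1 - F z.2| ≤ K * c z) :
    ∃ ρ : Measure (α × α), IsProbabilityMeasure ρ ∧
      ρ.map Prod.fst = (π.map Prod.fst).withDensity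
        (fun x => ENNReal.ofReal (F x / ∫ y, F y ∂π.map Prod.fst)) ∧
      ρ.map Prod.snd = (π.map Prod.snd).withDensity
        (fun x => ENNReal.ofReal (F x / ∫ y, F y ∂π.map Prod.snd)) ∧
      ∫ z, c z ∂ρ ≤ (Fu + K * (1 + Fu / Fl)) / Fl * ∫ z, c z ∂π := by
  have := Measure.isProbabilityMeasure_map (μ := π) measurable_fst.aemeasurable
  have := Measure.isProbabilityMeasure_map (μ := π) measurable_snd.aemeasurable
  set a := ∫ x, F x ∂π.map Prod.fst
  set b := ∫ x, F x ∂π.map Prod.snd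
  have ha : a ∈ Icc Fl Fu := integral_mem_Icc_of_forall_mem hF hFmem
  have hb : b ∈ Icc Fl Fu := integral_mem_Icc_of_forall_mem hF hFmem
  have hF0 : ∀ x, 0 ≤ F x := fun x => hFl.le.trans (hFmem x).1
  have hci : Integrable c π := integrable_of_forall_mem_Icc hc hc01
  obtain ⟨ρ, hρ, hρ₁, hρ₂, hρc⟩ := exists_coupling_withDensity π (hF.div_const a) (hF.div_const b)
    (fun x => div_nonneg (hF0 x) (hFl.le.trans ha.1))
    (fun y => div_nonneg (hF0 y) (hFl.le.trans hb.1))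
    ((integrable_of_forall_mem_Icc hF hFmem).div_const a)
    ((integrable_of_forall_mem_Icc hF hFmem).div_const b)
    (by rw [integral_div, div_self (hFl.trans_le ha.1).ne'])
    (by rw [integral_div, div_self (hFl.trans_le hb.1).ne']) hc hc01
  have hmin : ∀ z : α × α, min (F z.1 / a) (F z.2 / b) * c z ≤ Fu / Fl * c z := fun z =>
    mul_le_mul_of_nonneg_right ((min_le_left _ _).trans
      (div_le_div₀ (hF0 _ |>.trans (hFmem z.1).2) (hFmem z.1).2 hFl ha.1)) (hc01 z).1
  refine ⟨ρ, hρ, hρ₁, hρ₂, ?_⟩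
  calc ∫ z, c z ∂ρ
      ≤ ∫ z, min (F z.1 / a) (F z.2 / b) * c z ∂π + ∫ z, |F z.1 / a - F z.2 / b| ∂π := hρc
    _ ≤ ∫ z, Fu / Fl * c z ∂π + K / Fl * (1 + Fu / Fl) * ∫ z, c z ∂π := by
        gcongr ?_ + ?_
        · exact integral_mono_of_nonneg (ae_of_all _ fun z => mul_nonneg (le_min
            (div_nonneg (hF0 _) (hFl.le.trans ha.1)) (div_nonneg (hF0 _) (hFl.le.trans hb.1)))
            (hc01 z).1) (hci.const_mul _) (ae_of_all _ hmin)
        · exact integral_abs_div_sub_div_le π hF hFmem hFl hci hΔ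
    _ = (Fu + K * (1 + Fu / Fl)) / Fl * ∫ z, c z ∂π := by
        rw [integral_const_mul]; ring

end Reweighting

lemma abs_sub_le_mul_min_dist_one {X : Type*} [PseudoMetricSpace X] {F : X → ℝ} {L M : ℝ}
    (hL : 0 ≤ L) (hLip : ∀ x y, |F x - F y| ≤ L * dist x y) (hM : ∀ x y, |F x - F y| ≤ M)
    (x y : X) : |F x - F y| ≤ (L + M) * min (dist x y) 1 := by
  have hM0 : 0 ≤ M := (abs_nonneg _).trans (hM x y)
  rcases le_total (dist x y) 1 with h | h
  · rw [min_eq_left h]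
    nlinarith [hLip x y, dist_nonneg (x := x) (y := y)]
  · rw [min_eq_right h]
    linarith [hM x y]

section TruncatedWasserstein

variable {d : ℕ}

lemma W1trunc_le_integral {f g : Measure (Euc d)} (pl : Measure (Euc d × Euc d))
    [IsProbabilityMeasure pl] (h₁ : pl.map Prod.fst = f) (h₂ : pl.map Prod.snd = g) :
    W1trunc f g ≤ ∫ z, min (dist z.1 z.2) 1 ∂pl := by
  refine csInf_le ⟨0, ?_⟩ ⟨pl, inferInstance, h₁, h₂, rfl⟩
  rintro _ ⟨pl, -, -, -, rfl⟩
  exact integral_nonneg fun z => le_min dist_nonneg zero_le_one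

lemma le_mul_W1trunc {f g : Measure (Euc d)} [IsProbabilityMeasure f] [IsProbabilityMeasure g]
    {a C : ℝ} (hC : 0 ≤ C)
    (h : ∀ pl : Measure (Euc d × Euc d), IsProbabilityMeasure pl → pl.map Prod.fst = f →
      pl.map Prod.snd = g → a ≤ C * ∫ z, min (dist z.1 z.2) 1 ∂pl) :
    a ≤ C * W1trunc f g := by
  rw [W1trunc, ← smul_eq_mul, ← Real.sInf_smul_of_nonneg hC]
  refine le_csInf ⟨_, smul_mem_smul_set ⟨f.prod g, inferInstance, by simp, by simp, rfl⟩⟩ ?_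
  rintro _ ⟨_, ⟨pl, hpl, h₁, h₂, rfl⟩, rfl⟩
  exact h pl hpl h₁ h₂

lemma W1trunc_reweight_map_le {F : Euc d → ℝ} {L Fl Fu : ℝ} (hL : 0 ≤ L)
    (hFlip : ∀ x y, |F x - F y| ≤ L * dist x y) (hFmem : ∀ x, F x ∈ Icc Fl Fu) (hFl : 0 < Fl)
    (π : Measure (Euc d × Euc d)) [IsProbabilityMeasure π] :
    W1trunc (reweight F (π.map Prod.fst)) (reweight F (π.map Prod.snd)) ≤
      (1 / Fl) * (1 + Fu / Fl) * (L + 2 * Fu) * ∫ z, min (dist z.1 z.2) 1 ∂π := by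
  have hF : Measurable F := (LipschitzWith.of_dist_le_mul (K := ⟨L, hL⟩) fun x y =>
    (Real.dist_eq _ _).trans_le (hFlip x y)).continuous.measurable
  have hF0 : ∀ x, 0 ≤ F x := fun x => hFl.le.trans (hFmem x).1
  have hFu : 0 ≤ Fu := hFl.le.trans ((hFmem 0).1.trans (hFmem 0).2)
  have hΔ (z : Euc d × Euc d) : |F z.1 - F z.2| ≤ (L + Fu) * min (dist z.1 z.2) 1 :=
    abs_sub_le_mul_min_dist_one hL hFlip (fun x y =>
      abs_sub_le_of_nonneg_of_le (hF0 x) (hFmem x).2 (hF0 y) (hFmem y).2) z.1 z.2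
  obtain ⟨ρ, hρ, hρ₁, hρ₂, hρc⟩ := exists_coupling_withDensity_div_integral π hF hFmem hFl
    ((continuous_fst.dist continuous_snd).min continuous_const).measurable
    (fun z => ⟨le_min dist_nonneg zero_le_one, min_le_right _ _⟩) hΔ
  have hC : (Fu + (L + Fu) * (1 + Fu / Fl)) / Fl ≤ (1 / Fl) * (1 + Fu / Fl) * (L + 2 * Fu) := by
    rw [← sub_nonneg]
    have : (1 / Fl) * (1 + Fu / Fl) * (L + 2 * Fu) - (Fu + (L + Fu) * (1 + Fu / Fl)) / Fl =
        (Fu / Fl) ^ 2 := by field_simp; ring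
    rw [this]
    positivity
  calc W1trunc _ _ ≤ ∫ z, min (dist z.1 z.2) 1 ∂ρ := W1trunc_le_integral ρ hρ₁ hρ₂
    _ ≤ _ := hρc.trans (mul_le_mul_of_nonneg_right hC
        (integral_nonneg fun z => le_min dist_nonneg zero_le_one))

end TruncatedWasserstein

theorem selection_stability_general (d : ℕ) (F : Euc d → ℝ) (L Fl Fu : ℝ)
    (hL : 0 ≤ L) (hFlip : ∀ x y, |F x - F y| ≤ L * dist x y)
    (hFmem : ∀ x, F x ∈ Set.Icc Fl Fu) (hFl : 0 < Fl)
    (f g : Measure (Euc d))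
    (hf : IsProbabilityMeasure f) (hg : IsProbabilityMeasure g) :
    W1trunc (reweight F f) (reweight F g) ≤
      (1 / Fl) * (1 + Fu / Fl) * (L + 2 * Fu) * W1trunc f g := by
  have hFu : 0 ≤ Fu := hFl.le.trans ((hFmem 0).1.trans (hFmem 0).2)
  refine le_mul_W1trunc (by positivity) fun π _ h₁ h₂ => ?_
  subst h₁ h₂
  exact W1trunc_reweight_map_le hL hFlip hFmem hFl π

/-- **Lemma (selection stability).** For `F : ℝ^d → [F̲,F̄]` Lipschitz with constant `L`,
with `C_F := (1/F̲)(1 + F̄/F̲)(L + 2F̄)`, for any probability measures `f, g`: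
`W₁^∧(F f/⟨F,f⟩, F g/⟨F,g⟩) ≤ C_F W₁^∧(f,g)`. -/
theorem selection_stability (d : ℕ) (F : Euc d → ℝ) (L Fl Fu : ℝ)
    (hL : 0 ≤ L) (hFlip : ∀ x y, |F x - F y| ≤ L * dist x y)
    (hFmem : ∀ x, F x ∈ Set.Icc Fl Fu) (hFl : 0 < Fl) (hFlu : Fl ≤ Fu)
    (f g : Measure (Euc d))
    (hf : IsProbabilityMeasure f) (hg : IsProbabilityMeasure g) :
    W1trunc (reweight F f) (reweight F g) ≤
      (1 / Fl) * (1 + Fu / Fl) * (L + 2 * Fu) * W1trunc f g :=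
  selection_stability_general d F L Fl Fu hL hFlip hFmem hFl f g hf hg
end
end

section
/- Let F : ℝ^d → [F̲, F̄] be globally Lipschitz, bounded and strictly positive, σ > 0, τ ∈ (0,1]. For coupled random vectors X, X̄, parents X^{j₁}, X^{j₂} and X*(α¹), X*(α²) with (X*(α^k), X^{j_k}) optimal couplings (for the cost D^∧) between the reweighted law F f/⟨F,f⟩ and the reweighted empirical measure Σ_i w^i δ_{X^i}, and updates X' = (1−τ')X + τ'((1−γ)⊙X^{j₁} + γ⊙X^{j₂} + σξ), X̄' = (1−τ')X̄ + τ'((1−γ)⊙X*(α¹) + γ⊙X*(α²) + σξ) with the same τ' ~ Bern(τ), γ ~ Unif[0,1]^d, ξ ~ N(0,I_d) independent of the rest, one has E[D^∧(X', X̄')] ≤ (1−τ) E[D^∧(X, X̄)] + 2τ E[W₁^∧(F f/⟨F,f⟩, Σ_i w^i δ_{X^i})]. -/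
/-!
On `{τ' = 0}` both particles stay put. On `{τ' = 1}` the common noise `σξ` cancels and, for
`γ ∈ [0,1]^d`, the crossover map is 1-Lipschitz in each parent, so by subadditivity of
`min (·) 1` we get pointwise `D^∧(X', X̄') ≤ (1 - τ') D^∧(X, X̄) + τ' (D^∧(X*(α¹), X^{j₁}) +
D^∧(X*(α²), X^{j₂}))`. Since `τ'` is independent of everything else, taking expectations
factors out `E τ' = τ`, and optimality of the two couplings turns each parent term into
`E W₁^∧`.
-/

open MeasureTheory ProbabilityTheory Set
open scoped ENNReal NNReal

noncomputable section

lemma min_add_le_min_add_min {a b c : ℝ} (ha : 0 ≤ a) (hb : 0 ≤ b) (hc : 0 ≤ c) :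
    min (a + b) c ≤ min a c + min b c := by
  have := min_le_left (a + b) c
  have := min_le_right (a + b) c
  rcases le_total a c with hac | hca <;> rcases le_total b c with hbc | hcb <;>
    simp only [min_eq_left, min_eq_right, *] <;> linarith

lemma EuclideanSpace.norm_toLp_mul_le {ι : Type*} [Fintype ι] {c : ι → ℝ}
    (hc : ∀ i, |c i| ≤ 1) (v : EuclideanSpace ℝ ι) :
    ‖WithLp.toLp 2 (fun i => c i * v i)‖ ≤ ‖v‖ := by
  rw [EuclideanSpace.norm_eq, EuclideanSpace.norm_eq]
  gcongr with i
  rw [norm_mul]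
  exact mul_le_of_le_one_left (norm_nonneg _) (hc i)

lemma dist_crossover_le {d : ℕ} {γ : Euc d} (hγ : ∀ i, γ i ∈ Icc (0 : ℝ) 1)
    (ξ : Euc d) (σ : ℝ) (a b a' b' : Euc d) :
    dist (crossover γ ξ σ a b) (crossover γ ξ σ a' b') ≤ dist a a' + dist b b' := by
  have hsplit : crossover γ ξ σ a b - crossover γ ξ σ a' b' =
      WithLp.toLp 2 (fun i => (1 - γ i) * (a - a') i) +
        WithLp.toLp 2 (fun i => γ i * (b - b') i) := by
    ext i
    simp only [crossover, PiLp.sub_apply, PiLp.add_apply]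
    ring
  rw [dist_eq_norm, hsplit, dist_eq_norm, dist_eq_norm]
  refine (norm_add_le _ _).trans (add_le_add ?_ ?_) <;>
    refine EuclideanSpace.norm_toLp_mul_le (fun i => ?_) _ <;>
    rw [abs_le] <;> constructor <;> linarith [(hγ i).1, (hγ i).2]

lemma bern_ae_eq_zero_or_one (τ : ℝ) : ∀ᵐ t ∂(bern τ), t = 0 ∨ t = 1 := by
  rw [bern, ae_add_measure_iff]
  exact ⟨Measure.ae_smul_measure (by simp) _,
    Measure.ae_smul_measure (by simp) _⟩

lemma integral_id_bern {τ : ℝ} (hτ : 0 ≤ τ) : ∫ t, t ∂(bern τ) = τ := by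
  rw [bern, integral_add_measure, integral_smul_measure, integral_smul_measure,
    integral_dirac, integral_dirac]
  · simp [hτ]
  all_goals exact (integrable_dirac (by simp)).smul_measure (by simp)

section BernoulliVariable

variable {Ω : Type*} [MeasurableSpace Ω] {P : Measure Ω} {t : Ω → ℝ} {τ : ℝ}

lemma ae_eq_zero_or_one_of_map_eq_bern (ht : Measurable t) (hlaw : P.map t = bern τ) :
    ∀ᵐ ω ∂P, t ω = 0 ∨ t ω = 1 :=
  ae_of_ae_map ht.aemeasurable (hlaw ▸ bern_ae_eq_zero_or_one τ)

lemma integrable_of_map_eq_bern [IsFiniteMeasure P] (ht : Measurable t)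
    (hlaw : P.map t = bern τ) : Integrable t P :=
  Integrable.of_bound ht.aestronglyMeasurable 1
    ((ae_eq_zero_or_one_of_map_eq_bern ht hlaw).mono fun ω h => by
      rcases h with h | h <;> simp [h])

lemma integral_of_map_eq_bern (ht : Measurable t) (hlaw : P.map t = bern τ) (hτ : 0 ≤ τ) :
    ∫ ω, t ω ∂P = τ := by
  rw [← integral_id_bern hτ, ← hlaw,
    integral_map (f := fun s : ℝ => s) ht.aemeasurable aestronglyMeasurable_id]

end BernoulliVariable

lemma unifCube_ae_mem_Icc (d : ℕ) : ∀ᵐ y ∂(unifCube d), ∀ i, y i ∈ Icc (0 : ℝ) 1 := by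
  rw [unifCube, (MeasurableEquiv.toLp 2 _).measurableEmbedding.ae_map_iff]
  exact Filter.eventually_all.2 fun i =>
    Measure.tendsto_eval_ae_ae.eventually (ae_restrict_mem measurableSet_Icc)

lemma min_dist_lerp_le {E : Type*} [NormedAddCommGroup E] [Module ℝ E] {t B : ℝ}
    (ht : t = 0 ∨ t = 1) {u v u' v' : E} (h : min (dist u' v') 1 ≤ B) :
    min (dist ((1 - t) • u + t • u') ((1 - t) • v + t • v')) 1 ≤
      (1 - t) * min (dist u v) 1 + t * B := by
  rcases ht with rfl | rfl
  · simp
  · simpa using h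

lemma integrable_min_dist_one {Ω E : Type*} [MeasurableSpace Ω] {P : Measure Ω}
    [IsFiniteMeasure P] [PseudoMetricSpace E] [MeasurableSpace E] [OpensMeasurableSpace E]
    [SecondCountableTopology E] {U V : Ω → E} (hU : Measurable U) (hV : Measurable V) :
    Integrable (fun ω => min (dist (U ω) (V ω)) 1) P := by
  refine Integrable.of_bound ((hU.dist hV).min measurable_const).aestronglyMeasurable 1
    (Filter.Eventually.of_forall fun ω => ?_)
  rw [Real.norm_of_nonneg (le_min dist_nonneg zero_le_one)]
  exact min_le_right _ _

section IndepLerp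

variable {Ω β : Type*} [MeasurableSpace Ω] {P : Measure Ω} [IsProbabilityMeasure P]
  [MeasurableSpace β] {t : Ω → ℝ} {T : Ω → β} {a b : β → ℝ}

lemma integrable_lerp_of_indepFun (hind : IndepFun t T P) (ht : Integrable t P)
    (ha : Measurable a) (hb : Measurable b) (haT : Integrable (fun ω => a (T ω)) P)
    (hbT : Integrable (fun ω => b (T ω)) P) :
    Integrable (fun ω => (1 - t ω) * a (T ω) + t ω * b (T ω)) P :=
  ((hind.comp (measurable_const.sub measurable_id) ha).integrable_mul
    ((integrable_const 1).sub ht) haT).add ((hind.comp measurable_id hb).integrable_mul ht hbT)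

lemma integral_lerp_of_indepFun (hind : IndepFun t T P) (ht : Integrable t P)
    (ha : Measurable a) (hb : Measurable b) (haT : Integrable (fun ω => a (T ω)) P)
    (hbT : Integrable (fun ω => b (T ω)) P) :
    ∫ ω, (1 - t ω) * a (T ω) + t ω * b (T ω) ∂P =
      (1 - ∫ ω, t ω ∂P) * (∫ ω, a (T ω) ∂P) + (∫ ω, t ω ∂P) * ∫ ω, b (T ω) ∂P := by
  have hind_a : IndepFun (fun ω => 1 - t ω) (fun ω => a (T ω)) P :=
    hind.comp (measurable_const.sub measurable_id) ha
  have hind_b : IndepFun t (fun ω => b (T ω)) P := hind.comp measurable_id hb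
  have ht' : Integrable (fun ω => 1 - t ω) P := (integrable_const 1).sub ht
  rw [integral_add (f := fun ω => (1 - t ω) * a (T ω)) (g := fun ω => t ω * b (T ω))
    (hind_a.integrable_mul ht' haT) (hind_b.integrable_mul ht hbT),
    hind_a.integral_fun_mul_eq_mul_integral ht'.1 haT.1,
    hind_b.integral_fun_mul_eq_mul_integral ht.1 hbT.1, integral_sub (integrable_const 1) ht,
    integral_const, probReal_univ, one_smul]

end IndepLerp

theorem one_step_coupling_estimate_general (d N : ℕ) (F : Euc d → ℝ) (σ τ : ℝ)
    (hτ0 : 0 < τ)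
    (f : Measure (Euc d))
    (Ω : Type) (_mΩ : MeasurableSpace Ω) (P : Measure Ω)
    (hP : IsProbabilityMeasure P)
    (X Xb Xj1 Xj2 Xs1 Xs2 γv ξv X' Xb' : Ω → Euc d) (τr : Ω → ℝ)
    (x : Fin N → Ω → Euc d)
    (hXm : Measurable X) (hXbm : Measurable Xb)
    (hXj1m : Measurable Xj1) (hXj2m : Measurable Xj2)
    (hXs1m : Measurable Xs1) (hXs2m : Measurable Xs2)
    (hγm : Measurable γv) (hτm : Measurable τr)
    (hτlaw : P.map τr = bern τ)
    (hγlaw : P.map γv = unifCube d)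
    (hindτ : IndepFun τr
      (fun ω => (X ω, Xb ω, Xj1 ω, Xj2 ω, Xs1 ω, Xs2 ω, γv ω, ξv ω)) P)
    (hopt1 : (∫ ω, min (dist (Xs1 ω) (Xj1 ω)) 1 ∂P) =
      ∫ ω, W1trunc (reweight F f)
        (wEmpMeas (gaWeights F fun i => x i ω) (fun i => x i ω)) ∂P)
    (hopt2 : (∫ ω, min (dist (Xs2 ω) (Xj2 ω)) 1 ∂P) =
      ∫ ω, W1trunc (reweight F f)
        (wEmpMeas (gaWeights F fun i => x i ω) (fun i => x i ω)) ∂P)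
    (hX' : ∀ ω, X' ω = (1 - τr ω) • X ω +
      τr ω • crossover (γv ω) (ξv ω) σ (Xj1 ω) (Xj2 ω))
    (hXb' : ∀ ω, Xb' ω = (1 - τr ω) • Xb ω +
      τr ω • crossover (γv ω) (ξv ω) σ (Xs1 ω) (Xs2 ω)) :
    (∫ ω, min (dist (X' ω) (Xb' ω)) 1 ∂P) ≤
      (1 - τ) * (∫ ω, min (dist (X ω) (Xb ω)) 1 ∂P) +
      2 * τ * ∫ ω, W1trunc (reweight F f)
        (wEmpMeas (gaWeights F fun i => x i ω) (fun i => x i ω)) ∂P := by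
  have hγ01 : ∀ᵐ ω ∂P, ∀ i, γv ω i ∈ Icc (0 : ℝ) 1 :=
    ae_of_ae_map hγm.aemeasurable (hγlaw ▸ unifCube_ae_mem_Icc d)
  have hstep : ∀ᵐ ω ∂P, min (dist (X' ω) (Xb' ω)) 1 ≤
      (1 - τr ω) * min (dist (X ω) (Xb ω)) 1 +
        τr ω * (min (dist (Xs1 ω) (Xj1 ω)) 1 + min (dist (Xs2 ω) (Xj2 ω)) 1) := by
    filter_upwards [ae_eq_zero_or_one_of_map_eq_bern hτm hτlaw, hγ01] with ω hτω hγω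
    rw [hX', hXb', dist_comm (Xs1 ω), dist_comm (Xs2 ω)]
    exact min_dist_lerp_le hτω ((min_le_min_right 1 (dist_crossover_le hγω _ _ _ _ _ _)).trans
      (min_add_le_min_add_min dist_nonneg dist_nonneg zero_le_one))
  have ha : Measurable fun p : Euc d × Euc d × Euc d × Euc d × Euc d × Euc d × Euc d × Euc d =>
      min (dist p.1 p.2.1) 1 := by fun_prop
  have hb : Measurable fun p : Euc d × Euc d × Euc d × Euc d × Euc d × Euc d × Euc d × Euc d =>
      min (dist p.2.2.2.2.1 p.2.2.1) 1 + min (dist p.2.2.2.2.2.1 p.2.2.2.1) 1 := by fun_prop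
  have hτint : Integrable τr P := integrable_of_map_eq_bern hτm hτlaw
  have haT := integrable_min_dist_one (P := P) hXm hXbm
  have hbT := (integrable_min_dist_one (P := P) hXs1m hXj1m).add
    (integrable_min_dist_one hXs2m hXj2m)
  calc (∫ ω, min (dist (X' ω) (Xb' ω)) 1 ∂P)
      ≤ ∫ ω, (1 - τr ω) * min (dist (X ω) (Xb ω)) 1 +
          τr ω * (min (dist (Xs1 ω) (Xj1 ω)) 1 + min (dist (Xs2 ω) (Xj2 ω)) 1) ∂P :=
        integral_mono_of_nonneg (ae_of_all _ fun ω => le_min dist_nonneg zero_le_one)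
          (integrable_lerp_of_indepFun hindτ hτint ha hb haT hbT) hstep
    _ = (1 - τ) * (∫ ω, min (dist (X ω) (Xb ω)) 1 ∂P) +
          τ * ∫ ω, min (dist (Xs1 ω) (Xj1 ω)) 1 + min (dist (Xs2 ω) (Xj2 ω)) 1 ∂P := by
        rw [integral_lerp_of_indepFun hindτ hτint ha hb haT hbT,
          integral_of_map_eq_bern hτm hτlaw hτ0.le]
    _ = _ := by
        rw [integral_add (integrable_min_dist_one hXs1m hXj1m)
          (integrable_min_dist_one hXs2m hXj2m), hopt1, hopt2]
        ring

/-- **One-step coupling contraction.** With optimally coupled parents (for the truncated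
cost `D^∧`) and common randomness `τ' ~ Bern(τ)`, `γ ~ Unif[0,1]^d`, `ξ ~ N(0,I_d)`,
`E[D^∧(X',X̄')] ≤ (1-τ) E[D^∧(X,X̄)] + 2τ E[W₁^∧(Ff/⟨F,f⟩, ∑w^iδ_{X^i})]`. -/
theorem one_step_coupling_estimate (d N : ℕ) (F : Euc d → ℝ) (L Fl Fu σ τ : ℝ)
    (hL : 0 ≤ L) (hFlip : ∀ x y, |F x - F y| ≤ L * dist x y)
    (hFmem : ∀ x, F x ∈ Set.Icc Fl Fu) (hFl : 0 < Fl) (hFlu : Fl ≤ Fu)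
    (hσ : 0 < σ) (hτ0 : 0 < τ) (hτ1 : τ ≤ 1)
    (f : Measure (Euc d)) (hf : IsProbabilityMeasure f)
    (Ω : Type) (_mΩ : MeasurableSpace Ω) (P : Measure Ω)
    (hP : IsProbabilityMeasure P)
    (X Xb Xj1 Xj2 Xs1 Xs2 γv ξv X' Xb' : Ω → Euc d) (τr : Ω → ℝ)
    (x : Fin N → Ω → Euc d)
    (hXm : Measurable X) (hXbm : Measurable Xb)
    (hXj1m : Measurable Xj1) (hXj2m : Measurable Xj2)
    (hXs1m : Measurable Xs1) (hXs2m : Measurable Xs2)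
    (hγm : Measurable γv) (hξm : Measurable ξv) (hτm : Measurable τr)
    (hxm : ∀ i, Measurable (x i))
    (hτlaw : P.map τr = bern τ)
    (hγlaw : P.map γv = unifCube d) (hξlaw : P.map ξv = stdGaussian d)
    (hindτ : IndepFun τr
      (fun ω => (X ω, Xb ω, Xj1 ω, Xj2 ω, Xs1 ω, Xs2 ω, γv ω, ξv ω)) P)
    (hopt1 : (∫ ω, min (dist (Xs1 ω) (Xj1 ω)) 1 ∂P) =
      ∫ ω, W1trunc (reweight F f)
        (wEmpMeas (gaWeights F fun i => x i ω) (fun i => x i ω)) ∂P)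
    (hopt2 : (∫ ω, min (dist (Xs2 ω) (Xj2 ω)) 1 ∂P) =
      ∫ ω, W1trunc (reweight F f)
        (wEmpMeas (gaWeights F fun i => x i ω) (fun i => x i ω)) ∂P)
    (hX' : ∀ ω, X' ω = (1 - τr ω) • X ω +
      τr ω • crossover (γv ω) (ξv ω) σ (Xj1 ω) (Xj2 ω))
    (hXb' : ∀ ω, Xb' ω = (1 - τr ω) • Xb ω +
      τr ω • crossover (γv ω) (ξv ω) σ (Xs1 ω) (Xs2 ω)) :
    (∫ ω, min (dist (X' ω) (Xb' ω)) 1 ∂P) ≤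
      (1 - τ) * (∫ ω, min (dist (X ω) (Xb ω)) 1 ∂P) +
      2 * τ * ∫ ω, W1trunc (reweight F f)
        (wEmpMeas (gaWeights F fun i => x i ω) (fun i => x i ω)) ∂P :=
  one_step_coupling_estimate_general d N F σ τ hτ0 f Ω _mΩ P hP X Xb Xj1 Xj2 Xs1 Xs2 γv ξv X' Xb' τr
    x hXm hXbm hXj1m hXj2m hXs1m hXs2m hγm hτm hτlaw hγlaw hindτ hopt1 hopt2 hX' hXb'
end
end
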